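/- arXiv:2307.00559 — 6 statements merged into one kernel-verified Lean document; each statement's English description precedes it below -/
import Mathlib

section
/- Let η : ℕ → ℝ be a negligible function with 0 < η(n) < 1 for all n. Then there exists a negligible function ξ : ℕ → ℝ such that for every n ∈ ℕ and every real x with η(n) ≤ x ≤ 1, the binary entropy satisfies h(x − η(n)) ≥ h(x) − ξ(n). -/
/-- A function `η : ℕ → ℝ` is negligible if for every `c : ℕ` there exists `N : ℕ`
such that for all `n > N`, `η n < n ^ (-c)`. -/
def Negligible (η : ℕ → ℝ) : Prop :=
  ∀ c : ℕ, ∃ N : ℕ, ∀ n : ℕ, n > N → η n < (n : ℝ) ^ (-(c : ℤ))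

/-- The binary entropy function `h(x) = -x log x - (1-x) log (1-x)` (with the
convention `0 · log 0 = 0`, automatic since `Real.log 0 = 0`). -/
noncomputable def binEnt (x : ℝ) : ℝ :=
  -x * Real.log x - (1 - x) * Real.log (1 - x)

/-!
Binary entropy is concave on `[0, 1]` and vanishes at `0`, hence subadditive there:
`h x ≤ h (x - η) + h η`. So `ξ := h ∘ η` works, and it is negligible because
`h t ≤ 3 √t` and the square root of a negligible function is negligible.
-/

open Real

namespace Negligible

variable {f g : ℕ → ℝ}

theorem mono (hg : Negligible g) (hfg : ∀ n, f n ≤ g n) : Negligible f := fun c ↦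
  (hg c).imp fun _ hN n hn ↦ (hfg n).trans_lt (hN n hn)

theorem const_mul (hf : Negligible f) {C : ℝ} (hC : 0 ≤ C) :
    Negligible fun n ↦ C * f n := by
  intro c
  obtain ⟨N, hN⟩ := hf (c + 1)
  refine ⟨max N ⌈C⌉₊, fun n hn ↦ ?_⟩
  have hCn : C < n :=
    (Nat.le_ceil C).trans_lt (by exact_mod_cast (le_max_right _ _).trans_lt hn)
  have hn0 : (0 : ℝ) < n := hC.trans_lt hCn
  have hpow : (n : ℝ) ^ (-((c + 1 : ℕ) : ℤ)) = (n : ℝ) ^ (-(c : ℤ)) / n := by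
    rw [div_eq_mul_inv, ← zpow_neg_one, ← zpow_add₀ hn0.ne']
    push_cast
    ring_nf
  calc C * f n ≤ C * (n : ℝ) ^ (-((c + 1 : ℕ) : ℤ)) :=
        mul_le_mul_of_nonneg_left (hN n (le_max_left _ _ |>.trans_lt hn)).le hC
    _ = C / n * (n : ℝ) ^ (-(c : ℤ)) := by rw [hpow]; ring
    _ < (n : ℝ) ^ (-(c : ℤ)) :=
      mul_lt_of_lt_one_left (zpow_pos hn0 _) ((div_lt_one hn0).2 hCn)

theorem sqrt (hf : Negligible f) : Negligible fun n ↦ √(f n) := by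
  intro c
  obtain ⟨N, hN⟩ := hf (2 * c)
  refine ⟨N, fun n hn ↦ ?_⟩
  have hn0 : (0 : ℝ) < n := by exact_mod_cast N.zero_le.trans_lt hn
  rw [sqrt_lt' (zpow_pos hn0 _), ← zpow_natCast, ← zpow_mul]
  convert hN n hn using 2
  push_cast
  ring

end Negligible

theorem binEnt_eq_binEntropy : binEnt = binEntropy := by
  funext x
  simp only [binEnt, binEntropy_eq_negMulLog_add_negMulLog_one_sub, negMulLog]
  ring

theorem ConcaveOn.map_add_le {s : Set ℝ} {f : ℝ → ℝ} (hf : ConcaveOn ℝ s f) (h0 : 0 ∈ s)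
    (hf0 : 0 ≤ f 0) {a b : ℝ} (ha : 0 ≤ a) (hb : 0 ≤ b) (hab : a + b ∈ s) :
    f (a + b) ≤ f a + f b := by
  rcases (add_nonneg ha hb).eq_or_lt with hsum | hsum
  · obtain ⟨rfl, rfl⟩ : a = 0 ∧ b = 0 := ⟨by linarith, by linarith⟩
    simpa using hf0
  -- Concavity along the segment from `0` to `a + b`, whose point `t` has weight `t / (a + b)`.
  have le_of_weight : ∀ {t u : ℝ}, 0 ≤ t → 0 ≤ u → t + u = a + b →
      t / (a + b) * f (a + b) ≤ f t := by
    intro t u ht hu htu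
    have hw : u / (a + b) + t / (a + b) = 1 := by rw [← add_div, add_comm, htu, div_self hsum.ne']
    have := hf.2 h0 hab (by positivity) (by positivity) hw
    simp only [smul_eq_mul, mul_zero, zero_add, div_mul_cancel₀ _ hsum.ne'] at this
    nlinarith [div_nonneg hu hsum.le]
  have hsplit : a / (a + b) * f (a + b) + b / (a + b) * f (a + b) = f (a + b) := by
    rw [← add_mul, ← add_div, div_self hsum.ne', one_mul]
  linarith [le_of_weight ha hb rfl, le_of_weight hb ha (add_comm b a)]

theorem negMulLog_le_two_mul_sqrt {t : ℝ} (ht : 0 ≤ t) : negMulLog t ≤ 2 * √t := by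
  have hs : 0 ≤ √t := sqrt_nonneg t
  calc negMulLog t = 2 * √t * negMulLog √t := by
        rw [← mul_self_sqrt ht, negMulLog_mul, sqrt_mul_self hs]; ring
    _ ≤ 2 * √t * (1 - √t) :=
        mul_le_mul_of_nonneg_left (negMulLog_le_one_sub_self hs) (by positivity)
    _ ≤ 2 * √t := by nlinarith

theorem binEntropy_le_three_mul_sqrt {t : ℝ} (ht : 0 ≤ t) : binEntropy t ≤ 3 * √t := by
  rcases le_or_gt t 1 with ht1 | ht1
  · have hsqrt : t ≤ √t := le_sqrt_of_sq_le (by nlinarith)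
    have hone_sub : negMulLog (1 - t) ≤ t := by
      simpa using negMulLog_le_one_sub_self (sub_nonneg.2 ht1)
    rw [binEntropy_eq_negMulLog_add_negMulLog_one_sub]
    linarith [negMulLog_le_two_mul_sqrt ht]
  · linarith [binEntropy_neg_of_one_lt ht1, sqrt_nonneg t]

theorem binEnt_shift_negligible_general (η : ℕ → ℝ)
    (hpos : ∀ n, 0 < η n) (hneg : Negligible η) :
    ∃ ξ : ℕ → ℝ, Negligible ξ ∧
      ∀ n : ℕ, ∀ x : ℝ, η n ≤ x → x ≤ 1 → binEnt (x - η n) ≥ binEnt x - ξ n := by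
  rw [binEnt_eq_binEntropy]
  refine ⟨fun n ↦ binEntropy (η n), ?_, fun n x hx hx1 ↦ ?_⟩
  · exact (hneg.sqrt.const_mul zero_le_three).mono
      fun n ↦ binEntropy_le_three_mul_sqrt (hpos n).le
  · have := strictConcave_binEntropy.concaveOn.map_add_le ⟨le_rfl, zero_le_one⟩
      binEntropy_zero.ge (sub_nonneg.2 hx) (hpos n).le
      (by simpa using ⟨(hpos n).le.trans hx, hx1⟩)
    rw [sub_add_cancel] at this
    linarith

/-- If `η` is negligible with `0 < η n < 1` for all `n`, then there exists a negligible
function `ξ` such that for every `n` and every `x` with `η n ≤ x ≤ 1`,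
`h (x - η n) ≥ h x - ξ n`. -/
theorem binEnt_shift_negligible (η : ℕ → ℝ)
    (hpos : ∀ n, 0 < η n) (hlt : ∀ n, η n < 1) (hneg : Negligible η) :
    ∃ ξ : ℕ → ℝ, Negligible ξ ∧
      ∀ n : ℕ, ∀ x : ℝ, η n ≤ x → x ≤ 1 → binEnt (x - η n) ≥ binEnt x - ξ n :=
  binEnt_shift_negligible_general η hpos hneg
end

section
/- Let V be a finite-dimensional complex inner product space, let U₁ and U₂ be self-adjoint unitary operators on V, and let L be a normal operator on V satisfying [L, U₁] = [L, U₂] = 0. Then there exists a finite family (H_α) of pairwise orthogonal subspaces of V whose internal direct sum equals V, such that dim H_α ≤ 2 for every α, and such that for every α and every ψ ∈ H_α one has U₁ψ ∈ H_α, U₂ψ ∈ H_α and Lψ ∈ H_α. -/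
/-!
`L` and `L†` commute with each other and with `U₁, U₂`, so a nonzero subspace invariant under
all four meets some joint eigenspace of `L` and `L†` in a nonzero subspace that is still
invariant under `U₁, U₂`, and every subspace of it is invariant under `L, L†`. There
`U₁U₂ + U₂U₁` commutes with `U₁`, and a common eigenvector `v` of `U₁` (eigenvalue `μ`) and
`U₁U₂ + U₂U₁` (eigenvalue `γ`) spans with `U₂v` a plane invariant under all four operators,
because `U₁U₂v = γv - μU₂v`. The four operators form an adjoint-closed family, so inside an
invariant subspace the orthogonal complement of such a plane is again invariant, and induction
on the dimension gives the decomposition.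
-/

open Module End Function

namespace Module.End

section

variable {R M : Type*} [CommRing R] [AddCommGroup M] [Module R M]

theorem inf_eigenspace_mem_invtSubmodule {f g : End R M} (hfg : Commute f g)
    {p : Submodule R M} (hp : p ∈ g.invtSubmodule) (μ : R) :
    p ⊓ f.eigenspace μ ∈ g.invtSubmodule :=
  (invtSubmodule g).inf_mem hp (mapsTo_genEigenspace_of_comm hfg μ 1)

theorem mem_invtSubmodule_of_le_eigenspace {f : End R M} {p : Submodule R M} {μ : R}
    (h : p ≤ f.eigenspace μ) : p ∈ f.invtSubmodule := fun x hx => by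
  simpa [mem_eigenspace_iff.mp (h hx)] using p.smul_mem μ hx

theorem span_mem_invtSubmodule {f : End R M} {s : Set M}
    (h : ∀ x ∈ s, f x ∈ Submodule.span R s) : Submodule.span R s ∈ f.invtSubmodule := by
  rw [mem_invtSubmodule_iff_map_le, Submodule.map_span_le]
  exact h

end

variable {K V : Type*} [Field K] [IsAlgClosed K] [AddCommGroup V] [Module K V]
  [FiniteDimensional K V]

theorem exists_inf_eigenspace_ne_bot {f : End K V} {p : Submodule K V} (hp : p ≠ ⊥)
    (hf : p ∈ f.invtSubmodule) : ∃ μ, p ⊓ f.eigenspace μ ≠ ⊥ := by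
  have : Nontrivial p := Submodule.nontrivial_iff_ne_bot.mpr hp
  obtain ⟨μ, hμ⟩ := exists_eigenvalue (f.restrict hf)
  refine ⟨μ, ?_⟩
  rw [eigenspace, Submodule.inf_genEigenspace f p hf]
  simpa using (Submodule.map_injective_of_injective p.injective_subtype).ne hμ

end Module.End

theorem finrank_span_pair_le_two {K V : Type*} [Field K] [AddCommGroup V] [Module K V]
    (v w : V) : finrank K (Submodule.span K {v, w}) ≤ 2 := by
  classical
  have := finrank_span_finset_le_card (R := K) ({v, w} : Finset V)
  rw [Finset.coe_pair] at this
  exact this.trans Finset.card_le_two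

theorem iSup_fin_cons {α : Type*} [CompleteLattice α] {k : ℕ} (a : α) (f : Fin k → α) :
    ⨆ i, (Fin.cons a f : Fin (k + 1) → α) i = a ⊔ ⨆ i, f i := by
  rw [← (finSuccEquiv k).symm.iSup_comp, iSup_option]
  simp

theorem Pairwise.fin_cons {α : Type*} {r : α → α → Prop} [Std.Symm r] {k : ℕ} {a : α}
    {f : Fin k → α} (ha : ∀ i, r a (f i)) (hf : Pairwise (r on f)) :
    Pairwise (r on (Fin.cons a f : Fin (k + 1) → α)) := by
  intro i j hij
  induction i using Fin.cases <;> induction j using Fin.cases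
  · exact absurd rfl hij
  · exact ha _
  · exact symm_of r (ha _)
  · exact hf fun h => hij (congrArg Fin.succ h)

section SmallInvariantSubspaces

variable {K V : Type*} [Field K] [AddCommGroup V] [Module K V]

def HasSmallInvariantSubspaces (S : Set (End K V)) (d : ℕ) : Prop :=
  ∀ p : Submodule K V, p ≠ ⊥ → (∀ f ∈ S, p ∈ f.invtSubmodule) →
    ∃ q ≤ p, q ≠ ⊥ ∧ finrank K q ≤ d ∧ ∀ f ∈ S, q ∈ f.invtSubmodule

variable [IsAlgClosed K] [FiniteDimensional K V]

theorem hasSmallInvariantSubspaces_pair_of_mul_self_eq_one {f g : End K V} (hf : f * f = 1)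
    (hg : g * g = 1) : HasSmallInvariantSubspaces {f, g} 2 := by
  intro p hp hpS
  have hpf := hpS f (by simp)
  have hpg := hpS g (by simp)
  set c := f * g + g * f
  have hcf : Commute c f := by
    simp only [Commute, SemiconjBy, c, add_mul, mul_add, mul_assoc, hf, mul_one]
    simp only [← mul_assoc, hf, one_mul, add_comm]
  have hpc : p ∈ c.invtSubmodule :=
    invtSubmodule_inf_invtSubmodule_le_invtSubmodule_add _ _
      ⟨invtSubmodule.comp _ hpf hpg, invtSubmodule.comp _ hpg hpf⟩
  obtain ⟨γ, hγ⟩ := exists_inf_eigenspace_ne_bot hp hpc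
  obtain ⟨μ, hμ⟩ := exists_inf_eigenspace_ne_bot hγ (inf_eigenspace_mem_invtSubmodule hcf hpf γ)
  obtain ⟨v, ⟨⟨hvp, hvc⟩, hvf⟩, hv0⟩ := Submodule.exists_mem_ne_zero_of_ne_bot hμ
  rw [SetLike.mem_coe, mem_eigenspace_iff] at hvc hvf
  have hgg : g (g v) = v := LinearMap.congr_fun hg v
  have hfg : f (g v) = γ • v - μ • g v := by
    rw [eq_sub_iff_add_eq, ← hvc, ← map_smul, ← hvf]
    rfl
  set W := Submodule.span K {v, g v}
  have hv : v ∈ W := Submodule.subset_span (by simp)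
  have hgv : g v ∈ W := Submodule.subset_span (by simp)
  have hWf : W ∈ f.invtSubmodule := span_mem_invtSubmodule <| by
    rintro x (rfl | rfl)
    · simpa [hvf] using W.smul_mem μ hv
    · simpa [hfg] using sub_mem (W.smul_mem γ hv) (W.smul_mem μ hgv)
  have hWg : W ∈ g.invtSubmodule := span_mem_invtSubmodule <| by
    rintro x (rfl | rfl)
    exacts [hgv, by simpa [hgg] using hv]
  refine ⟨W, ?_, (Submodule.ne_bot_iff _).mpr ⟨v, hv, hv0⟩, finrank_span_pair_le_two v (g v), ?_⟩
  · rw [Submodule.span_le]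
    rintro x (rfl | rfl)
    exacts [hvp, hpg hvp]
  · rintro h (rfl | rfl)
    exacts [hWf, hWg]

theorem HasSmallInvariantSubspaces.insert_of_commute {S : Set (End K V)} {d : ℕ}
    (hS : HasSmallInvariantSubspaces S d) {a : End K V} (ha : ∀ f ∈ S, Commute a f) :
    HasSmallInvariantSubspaces (insert a S) d := by
  intro p hp hpS
  obtain ⟨μ, hμ⟩ := exists_inf_eigenspace_ne_bot hp (hpS a (Set.mem_insert a S))
  obtain ⟨q, hqp, hq0, hqd, hqS⟩ := hS _ hμ fun f hf =>
    inf_eigenspace_mem_invtSubmodule (ha f hf) (hpS f (Set.mem_insert_of_mem a hf)) μ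
  refine ⟨q, hqp.trans inf_le_left, hq0, hqd, ?_⟩
  rintro f (rfl | hf)
  exacts [mem_invtSubmodule_of_le_eigenspace (hqp.trans inf_le_right), hqS f hf]

end SmallInvariantSubspaces

theorem HasSmallInvariantSubspaces.exists_orthogonal_decomposition {𝕜 E : Type*} [RCLike 𝕜]
    [NormedAddCommGroup E] [InnerProductSpace 𝕜 E] [FiniteDimensional 𝕜 E]
    {S : Set (End 𝕜 E)} {d : ℕ} (hS : HasSmallInvariantSubspaces S d)
    (hadj : ∀ f ∈ S, LinearMap.adjoint f ∈ S) (p : Submodule 𝕜 E)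
    (hp : ∀ f ∈ S, p ∈ f.invtSubmodule) :
    ∃ (k : ℕ) (H : Fin k → Submodule 𝕜 E), Pairwise (Submodule.IsOrtho on H) ∧ ⨆ α, H α = p ∧
      ∀ α, finrank 𝕜 (H α) ≤ d ∧ ∀ f ∈ S, H α ∈ f.invtSubmodule := by
  induction hn : finrank 𝕜 p using Nat.strong_induction_on generalizing p with
  | _ n ih =>
  by_cases hp0 : p = ⊥
  · exact ⟨0, finZeroElim, fun α => α.elim0, by simp [hp0], fun α => α.elim0⟩
  obtain ⟨q, hqp, hq0, hqd, hqS⟩ := hS p hp0 hp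
  have hrest : ∀ f ∈ S, qᗮ ⊓ p ∈ f.invtSubmodule := fun f hf =>
    f.invtSubmodule.inf_mem (mem_invtSubmodule_adjoint_iff.mp (hqS _ (hadj f hf))) (hp f hf)
  have hlt : finrank 𝕜 ↥(qᗮ ⊓ p) < n := by
    have := Submodule.finrank_add_inf_finrank_orthogonal hqp
    have := Submodule.one_le_finrank_iff.mpr hq0
    omega
  obtain ⟨k, H, horth, hsup, hH⟩ := ih _ hlt _ hrest rfl
  have hqH : ∀ α, q ⟂ H α := fun α =>
    (Submodule.isOrtho_orthogonal_right q).mono_right ((le_iSup H α).trans (hsup ▸ inf_le_left))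
  refine ⟨k + 1, Fin.cons q H, horth.fin_cons hqH, ?_, Fin.cases ⟨hqd, hqS⟩ hH⟩
  rw [iSup_fin_cons, hsup]
  exact Submodule.sup_orthogonal_inf_of_hasOrthogonalProjection hqp

/-- **Jordan's lemma extension.** Let `V` be a finite-dimensional complex inner product
space, `U₁, U₂` self-adjoint unitary operators on `V`, and `L` a normal operator with
`[L, U₁] = [L, U₂] = 0`. Then `V` decomposes as an internal direct sum of pairwise
orthogonal subspaces `H α`, each of dimension at most `2`, each invariant under
`U₁`, `U₂` and `L`. -/
theorem jordan_lemma_extension {V : Type} [NormedAddCommGroup V]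
    [InnerProductSpace ℂ V] [FiniteDimensional ℂ V]
    (U₁ U₂ L : V →ₗ[ℂ] V)
    (hU₁sa : LinearMap.adjoint U₁ = U₁) (hU₁u : U₁ ∘ₗ U₁ = LinearMap.id)
    (hU₂sa : LinearMap.adjoint U₂ = U₂) (hU₂u : U₂ ∘ₗ U₂ = LinearMap.id)
    (hLnorm : LinearMap.adjoint L ∘ₗ L = L ∘ₗ LinearMap.adjoint L)
    (hLU₁ : L ∘ₗ U₁ = U₁ ∘ₗ L) (hLU₂ : L ∘ₗ U₂ = U₂ ∘ₗ L) :
    ∃ (k : ℕ) (H : Fin k → Submodule ℂ V),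
      (∀ α β, α ≠ β → ∀ x ∈ H α, ∀ y ∈ H β, (inner ℂ x y : ℂ) = 0) ∧
      (⨆ α, H α) = ⊤ ∧
      (∀ α, Module.finrank ℂ (H α) ≤ 2) ∧
      (∀ α, ∀ ψ ∈ H α, U₁ ψ ∈ H α ∧ U₂ ψ ∈ H α ∧ L ψ ∈ H α) := by
  have hLL' : Commute L (LinearMap.adjoint L) := hLnorm.symm
  have hLU₁' : Commute L U₁ := hLU₁
  have hLU₂' : Commute L U₂ := hLU₂
  have hL'U₁ : Commute (LinearMap.adjoint L) U₁ := by
    simpa [LinearMap.star_eq_adjoint, hU₁sa] using hLU₁'.star_star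
  have hL'U₂ : Commute (LinearMap.adjoint L) U₂ := by
    simpa [LinearMap.star_eq_adjoint, hU₂sa] using hLU₂'.star_star
  have hsmall : HasSmallInvariantSubspaces {L, LinearMap.adjoint L, U₁, U₂} 2 :=
    ((hasSmallInvariantSubspaces_pair_of_mul_self_eq_one hU₁u hU₂u).insert_of_commute
      (by simp [hL'U₁, hL'U₂])).insert_of_commute (by simp [hLL', hLU₁', hLU₂'])
  obtain ⟨k, H, horth, hsup, hH⟩ := hsmall.exists_orthogonal_decomposition
    (by simp [hU₁sa, hU₂sa]) ⊤ fun f _ => invtSubmodule.top_mem f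
  refine ⟨k, H, fun α β hαβ => Submodule.isOrtho_iff_inner_eq.mp (horth hαβ), hsup,
    fun α => (hH α).1, fun α ψ hψ => ⟨?_, ?_, ?_⟩⟩
  exacts [(hH α).2 U₁ (by simp) hψ, (hH α).2 U₂ (by simp) hψ, (hH α).2 L (by simp) hψ]
end

section
/- Let V be a finite-dimensional complex inner product space and let Π, M, K be orthogonal (Hermitian) projections on V such that [K, Π] = [K, M] = 0. Then there exists a finite family (H_α) of pairwise orthogonal subspaces of V whose internal direct sum equals V, such that dim H_α ≤ 2 for every α, each H_α is invariant under Π, M and K, and for every α with dim H_α = 2 there exist an orthonormal basis (e, f) of H_α and an angle θ_α ∈ ℝ such that Πe = e, Πf = 0, Me = cos²(θ_α)·e + cos(θ_α)sin(θ_α)·f and Mf = cos(θ_α)sin(θ_α)·e + sin²(θ_α)·f. -/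
/-!
The eigenspaces of `K` are invariant under `P` and `M`, so it suffices to split off blocks for
the pair `P, M` inside one of them. If `v` is a unit vector in `range P` that is an eigenvector
of `PMP`, then `span {v, M v}` is invariant under `P` and `M`; writing `r = ‖M v‖² = ⟪v, M v⟫`,
one has `M v = r v + g` with `g ⟂ v`, `P g = 0` and `‖g‖² = r (1 - r)`, which yields the angle
`θ = arccos √r`. Since all three operators are self-adjoint, the orthogonal complement of such a
block is again invariant, and induction on the dimension splits `V` into blocks.
-/

open Module Submodule
open scoped InnerProductSpace

lemma exists_angle_of_sq_add_sq_eq {a b : ℝ} (hb : 0 ≤ b) (h : a ^ 2 + b ^ 2 = a) :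
    ∃ θ : ℝ, Real.cos θ ^ 2 = a ∧ Real.cos θ * Real.sin θ = b ∧ Real.sin θ ^ 2 = 1 - a := by
  have ha : 0 ≤ a := by nlinarith
  have ha1 : a ≤ 1 := by nlinarith
  have hcos : Real.cos (Real.arccos √a) = √a :=
    Real.cos_arccos (by linarith [Real.sqrt_nonneg a]) (Real.sqrt_le_one.mpr ha1)
  refine ⟨Real.arccos √a, ?_, ?_, ?_⟩
  · rw [hcos, Real.sq_sqrt ha]
  · rw [hcos, Real.sin_arccos, Real.sq_sqrt ha, ← Real.sqrt_mul ha,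
      show a * (1 - a) = b ^ 2 by linarith, Real.sqrt_sq hb]
  · rw [Real.sin_arccos, Real.sq_sqrt ha, Real.sq_sqrt (by linarith)]

lemma exists_angle_apply_eq_of_isIdempotentElem {E : Type*} [AddCommGroup E] [Module ℂ E]
    {M : Module.End ℂ E} (hM : IsIdempotentElem M) {e f : E} {r b : ℝ} (hb : 0 < b)
    (hrb : r ^ 2 + b ^ 2 = r) (hMe : M e = (r : ℂ) • e + (b : ℂ) • f) :
    ∃ θ : ℝ, M e = ((Real.cos θ : ℂ) ^ 2) • e + ((Real.cos θ : ℂ) * (Real.sin θ : ℂ)) • f ∧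
      M f = ((Real.cos θ : ℂ) * (Real.sin θ : ℂ)) • e + ((Real.sin θ : ℂ) ^ 2) • f := by
  obtain ⟨θ, hc, hcs, hs⟩ := exists_angle_of_sq_add_sq_eq hb.le hrb
  have hMf : M f = (b : ℂ) • e + ((1 - r : ℝ) : ℂ) • f := by
    -- `b • M f = M (M e - r • e) = (1 - r) • M e` by idempotence
    have hbMf : (b : ℂ) • M f = ((1 - r : ℝ) : ℂ) • M e := by
      have h := congr(M $hMe)
      rw [← Module.End.mul_apply, hM.eq, map_add, map_smul, map_smul] at h
      push_cast
      rw [sub_smul, one_smul, eq_sub_iff_add_eq, add_comm, ← h]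
    have hrb' : ((1 - r : ℝ) : ℂ) * r = b * b := by
      exact_mod_cast (by linarith : (1 - r) * r = b * b)
    apply smul_right_injective E (by exact_mod_cast hb.ne' : (b : ℂ) ≠ 0)
    simp only [hbMf, hMe, smul_add, smul_smul, hrb', mul_comm (b : ℂ)]
  refine ⟨θ, ?_, ?_⟩
  · rw [hMe, ← hc, ← hcs]; push_cast; rfl
  · rw [hMf, ← hcs, ← hs]; push_cast; rfl

lemma LinearMap.IsSymmetricProjection.inner_apply_self {𝕜 E : Type*} [RCLike 𝕜]
    [NormedAddCommGroup E] [InnerProductSpace 𝕜 E] {p : E →ₗ[𝕜] E}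
    (hp : p.IsSymmetricProjection) (x : E) : ⟪x, p x⟫_𝕜 = (‖p x‖ : 𝕜) ^ 2 := by
  rw [← inner_self_eq_norm_sq_to_K, hp.isSymmetric, ← Module.End.mul_apply,
    hp.isIdempotentElem.eq]

lemma exists_mem_norm_eq_one_apply_eq_smul {V : Type*} [NormedAddCommGroup V]
    [InnerProductSpace ℂ V] [FiniteDimensional ℂ V] {T : Module.End ℂ V} {U : Submodule ℂ V}
    (hU : U ∈ T.invtSubmodule) (hU0 : U ≠ ⊥) :
    ∃ μ : ℂ, ∃ v ∈ U, ‖v‖ = 1 ∧ T v = μ • v := by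
  have : Nontrivial U := nontrivial_iff_ne_bot.mpr hU0
  obtain ⟨μ, hμ⟩ := Module.End.exists_eigenvalue (T.restrict hU)
  obtain ⟨w, hw⟩ := hμ.exists_hasEigenvector
  have hw0 : (w : V) ≠ 0 := by simpa using hw.2
  refine ⟨μ, (‖(w : V)‖⁻¹ : ℂ) • (w : V), U.smul_mem _ w.2, norm_smul_inv_norm hw0, ?_⟩
  rw [map_smul, smul_comm]
  exact congr_arg _ (congr_arg Subtype.val hw.apply_eq_smul)

theorem exists_orthogonal_decomposition {𝕜 E : Type*} [RCLike 𝕜] [NormedAddCommGroup E]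
    [InnerProductSpace 𝕜 E] [FiniteDimensional 𝕜 E] {𝒯 : Set (Module.End 𝕜 E)}
    (h𝒯 : ∀ T ∈ 𝒯, T.IsSymmetric) (good : Submodule 𝕜 E → Prop)
    (hgood : ∀ U : Submodule 𝕜 E, (∀ T ∈ 𝒯, U ∈ T.invtSubmodule) → U ≠ ⊥ →
      ∃ W ≤ U, W ≠ ⊥ ∧ (∀ T ∈ 𝒯, W ∈ T.invtSubmodule) ∧ good W) :
    ∃ (k : ℕ) (H : Fin k → Submodule 𝕜 E), Pairwise (fun α β => H α ⟂ H β) ∧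
      (⨆ α, H α) = ⊤ ∧ ∀ α, (∀ T ∈ 𝒯, H α ∈ T.invtSubmodule) ∧ good (H α) := by
  suffices ∀ U : Submodule 𝕜 E, (∀ T ∈ 𝒯, U ∈ T.invtSubmodule) →
      ∃ (k : ℕ) (H : Fin k → Submodule 𝕜 E), Pairwise (fun α β => H α ⟂ H β) ∧
        (⨆ α, H α) = U ∧ ∀ α, (∀ T ∈ 𝒯, H α ∈ T.invtSubmodule) ∧ good (H α) from
    this ⊤ fun T _ => Module.End.invtSubmodule.top_mem T
  intro U
  induction U using WellFoundedLT.induction with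
  | _ U ih =>
  intro hU
  by_cases hU0 : U = ⊥
  · exact ⟨0, Fin.elim0, fun α => α.elim0, by simp [hU0], fun α => α.elim0⟩
  obtain ⟨W, hWU, hW0, hWinv, hWgood⟩ := hgood U hU hU0
  have hlt : Wᗮ ⊓ U < U := by
    refine inf_le_right.lt_of_ne fun h => hW0 (eq_bot_iff.2 ?_)
    rw [← inf_orthogonal_eq_bot W]
    exact le_inf le_rfl (hWU.trans (h ▸ inf_le_left))
  obtain ⟨k, H, hHorth, hHsup, hH⟩ := ih _ hlt fun T hT =>
    Module.End.invtSubmodule.inf_mem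
      ((h𝒯 T hT).orthogonalComplement_mem_invtSubmodule (hWinv T hT)) (hU T hT)
  have hHW : ∀ α, H α ⟂ W := fun α =>
    isOrtho_iff_le.2 ((le_iSup H α).trans (hHsup ▸ inf_le_left))
  refine ⟨k + 1, Fin.cons W H, pairwise_fin_succ_iff.2 ⟨hHW, fun α => (hHW α).symm, hHorth⟩,
    ?_, Fin.cases ⟨hWinv, hWgood⟩ hH⟩
  rw [← sSup_range, Fin.range_cons, sSup_insert, sSup_range, hHsup,
    sup_orthogonal_inf_of_hasOrthogonalProjection hWU]

section JordanBlock

variable {V : Type*} [NormedAddCommGroup V] [InnerProductSpace ℂ V]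

def HasJordanBasis (P M : Module.End ℂ V) (W : Submodule ℂ V) : Prop :=
  ∃ (e f : V) (θ : ℝ),
    e ∈ W ∧ f ∈ W ∧ ‖e‖ = 1 ∧ ‖f‖ = 1 ∧ (inner ℂ e f : ℂ) = 0 ∧
    P e = e ∧ P f = 0 ∧
    M e = ((Real.cos θ : ℂ) ^ 2) • e + ((Real.cos θ : ℂ) * (Real.sin θ : ℂ)) • f ∧
    M f = ((Real.cos θ : ℂ) * (Real.sin θ : ℂ)) • e + ((Real.sin θ : ℂ) ^ 2) • f

def IsJordanBlock (P M : Module.End ℂ V) (W : Submodule ℂ V) : Prop :=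
  finrank ℂ W ≤ 2 ∧ W ∈ P.invtSubmodule ∧ W ∈ M.invtSubmodule ∧
    (finrank ℂ W = 2 → HasJordanBasis P M W)

lemma hasJordanBasis_span_pair {P M : Module.End ℂ V} (hP : P.IsSymmetricProjection)
    (hM : M.IsSymmetricProjection) {v : V} (hv : ‖v‖ = 1) (hPv : P v = v) {μ : ℂ}
    (hPMv : P (M v) = μ • v) (h2 : finrank ℂ (span ℂ {v, M v}) = 2) :
    HasJordanBasis P M (span ℂ {v, M v}) := by
  have hvv : ⟪v, v⟫_ℂ = 1 := by simp [inner_self_eq_norm_sq_to_K, hv]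
  set r : ℝ := ‖M v‖ ^ 2 with hr
  have hvMv : ⟪v, M v⟫_ℂ = r := by rw [hM.inner_apply_self, hr]; norm_cast
  have hμ : μ = r := by
    calc μ = ⟪v, P (M v)⟫_ℂ := by rw [hPMv, inner_smul_right, hvv, mul_one]
      _ = r := by rw [← hP.isSymmetric, hPv, hvMv]
  set g := M v - (r : ℂ) • v with hg_def
  have hvg : ⟪v, g⟫_ℂ = 0 := by
    rw [inner_sub_right, inner_smul_right, hvMv, hvv, mul_one, sub_self]
  have hPg : P g = 0 := by rw [map_sub, map_smul, hPMv, hPv, hμ, sub_self]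
  have hg : g ≠ 0 := by
    intro hg
    rw [hg_def, sub_eq_zero] at hg
    rw [hg, Set.pair_comm, span_insert_eq_span (smul_mem _ _ (mem_span_singleton_self v)),
      finrank_span_singleton (ne_zero_of_norm_ne_zero (hv.symm ▸ one_ne_zero))] at h2
    exact absurd h2 (by norm_num)
  set f := (‖g‖⁻¹ : ℂ) • g
  have hb : 0 < ‖g‖ := norm_pos_iff.mpr hg
  have hMv : M v = (r : ℂ) • v + (‖g‖ : ℂ) • f := by
    rw [smul_inv_smul₀ (by exact_mod_cast hb.ne'), hg_def, add_sub_cancel]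
  have hrb : r ^ 2 + ‖g‖ ^ 2 = r := by
    have h := norm_add_sq_eq_norm_sq_add_norm_sq_of_inner_eq_zero ((r : ℂ) • v) g
      (by rw [inner_smul_left, hvg, mul_zero])
    rw [hg_def, add_sub_cancel, norm_smul, hv, mul_one, Complex.norm_real, Real.norm_eq_abs,
      abs_of_nonneg (by positivity)] at h
    linear_combination -h
  obtain ⟨θ, hMe, hMf⟩ := exists_angle_apply_eq_of_isIdempotentElem hM.isIdempotentElem hb hrb hMv
  refine ⟨v, f, θ, subset_span (by simp), ?_, hv, norm_smul_inv_norm hg, ?_, hPv, ?_, hMe, hMf⟩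
  · exact smul_mem _ _ (sub_mem (subset_span (by simp)) (smul_mem _ _ (subset_span (by simp))))
  · rw [inner_smul_right, hvg, mul_zero]
  · rw [map_smul, hPg, smul_zero]

lemma exists_isJordanBlock_le [FiniteDimensional ℂ V] {P M : Module.End ℂ V}
    (hP : P.IsSymmetricProjection) (hM : M.IsSymmetricProjection) {E : Submodule ℂ V}
    (hEP : E ∈ P.invtSubmodule) (hEM : E ∈ M.invtSubmodule) (hE : E ≠ ⊥) :
    ∃ W ≤ E, W ≠ ⊥ ∧ IsJordanBlock P M W := by
  by_cases hF : E ⊓ LinearMap.range P = ⊥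
  · have hPE : ∀ x ∈ E, P x = 0 := fun x hx => by
      have : P x ∈ E ⊓ LinearMap.range P := ⟨hEP hx, LinearMap.mem_range_self P x⟩
      rwa [hF, mem_bot] at this
    obtain ⟨μ, w, hwE, hw, hMw⟩ := exists_mem_norm_eq_one_apply_eq_smul hEM hE
    have hw0 : w ≠ 0 := ne_zero_of_norm_ne_zero (hw.symm ▸ one_ne_zero)
    have hw1 : finrank ℂ (span ℂ {w}) = 1 := finrank_span_singleton hw0
    refine ⟨span ℂ {w}, (span_singleton_le_iff_mem _ _).2 hwE, by simpa using hw0,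
      by omega, span_le.2 ?_, span_le.2 ?_, by omega⟩
    · simp [hPE w hwE]
    · simpa [hMw] using smul_mem _ μ (mem_span_singleton_self w)
  · have hPMP : E ⊓ LinearMap.range P ∈ (P * M * P).invtSubmodule :=
      Module.End.invtSubmodule.inf_mem (fun x hx => hEP (hEM (hEP hx)))
        (fun x _ => LinearMap.mem_range_self P _)
    obtain ⟨μ, v, ⟨hvE, hvP⟩, hv, hPMPv⟩ := exists_mem_norm_eq_one_apply_eq_smul hPMP hF
    have hPv : P v = v := (LinearMap.IsIdempotentElem.mem_range_iff hP.isIdempotentElem).mp hvP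
    have hPMv : P (M v) = μ • v := by simpa [hPv] using hPMPv
    have hvW : v ∈ span ℂ {v, M v} := subset_span (by simp)
    have hMvW : M v ∈ span ℂ {v, M v} := subset_span (by simp)
    refine ⟨span ℂ {v, M v}, span_le.2 ?_, ?_, ?_, span_le.2 ?_, span_le.2 ?_,
      hasJordanBasis_span_pair hP hM hv hPv hPMv⟩
    · exact Set.insert_subset_iff.2 ⟨hvE, Set.singleton_subset_iff.2 (hEM hvE)⟩
    · exact fun h => ne_zero_of_norm_ne_zero (hv.symm ▸ one_ne_zero) ((mem_bot ℂ).1 (h ▸ hvW))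
    · classical
      have h := finrank_span_finset_le_card (R := ℂ) ({v, M v} : Finset V)
      rw [Finset.coe_pair] at h
      exact h.trans Finset.card_le_two
    · simpa [Set.insert_subset_iff, hPv, hPMv, hvW] using smul_mem _ μ hvW
    · simp [Set.insert_subset_iff, ← Module.End.mul_apply, hM.isIdempotentElem.eq, hMvW]

lemma exists_isJordanBlock_le_of_commute [FiniteDimensional ℂ V] {P M K : Module.End ℂ V}
    (hP : P.IsSymmetricProjection) (hM : M.IsSymmetricProjection) (hKP : Commute K P)
    (hKM : Commute K M) {U : Submodule ℂ V} (hUP : U ∈ P.invtSubmodule)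
    (hUM : U ∈ M.invtSubmodule) (hUK : U ∈ K.invtSubmodule) (hU : U ≠ ⊥) :
    ∃ W ≤ U, W ≠ ⊥ ∧ W ∈ K.invtSubmodule ∧ IsJordanBlock P M W := by
  obtain ⟨μ, v, hvU, hv, hKv⟩ := exists_mem_norm_eq_one_apply_eq_smul hUK hU
  have hE : U ⊓ K.eigenspace μ ≠ ⊥ := fun h =>
    ne_zero_of_norm_ne_zero (hv.symm ▸ one_ne_zero)
      ((mem_bot ℂ).1 (h ▸ ⟨hvU, Module.End.mem_eigenspace_iff.2 hKv⟩))
  obtain ⟨W, hWE, hW, hWJ⟩ := exists_isJordanBlock_le hP hM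
    (Module.End.invtSubmodule.inf_mem hUP (Module.End.mapsTo_genEigenspace_of_comm hKP μ 1))
    (Module.End.invtSubmodule.inf_mem hUM (Module.End.mapsTo_genEigenspace_of_comm hKM μ 1)) hE
  refine ⟨W, hWE.trans inf_le_left, hW, fun x hx => ?_, hWJ⟩
  rw [mem_comap, Module.End.mem_eigenspace_iff.1 (hWE hx).2]
  exact smul_mem _ μ hx

end JordanBlock

theorem jordan_lemma_projections_general {V : Type} [NormedAddCommGroup V]
    [InnerProductSpace ℂ V] [FiniteDimensional ℂ V]
    (P M K : V →ₗ[ℂ] V)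
    (hPsa : LinearMap.adjoint P = P) (hPproj : P ∘ₗ P = P)
    (hMsa : LinearMap.adjoint M = M) (hMproj : M ∘ₗ M = M)
    (hKsa : LinearMap.adjoint K = K)
    (hKP : K ∘ₗ P = P ∘ₗ K) (hKM : K ∘ₗ M = M ∘ₗ K) :
    ∃ (k : ℕ) (H : Fin k → Submodule ℂ V),
      (∀ α β, α ≠ β → ∀ x ∈ H α, ∀ y ∈ H β, (inner ℂ x y : ℂ) = 0) ∧
      (⨆ α, H α) = ⊤ ∧
      (∀ α, Module.finrank ℂ (H α) ≤ 2) ∧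
      (∀ α, ∀ ψ ∈ H α, P ψ ∈ H α ∧ M ψ ∈ H α ∧ K ψ ∈ H α) ∧
      (∀ α, Module.finrank ℂ (H α) = 2 →
        ∃ (e f : V) (θ : ℝ),
          e ∈ H α ∧ f ∈ H α ∧ ‖e‖ = 1 ∧ ‖f‖ = 1 ∧ (inner ℂ e f : ℂ) = 0 ∧
          P e = e ∧ P f = 0 ∧
          M e = ((Real.cos θ : ℂ) ^ 2) • e + ((Real.cos θ : ℂ) * (Real.sin θ : ℂ)) • f ∧
          M f = ((Real.cos θ : ℂ) * (Real.sin θ : ℂ)) • e + ((Real.sin θ : ℂ) ^ 2) • f) := by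
  have isSymmetric {A : V →ₗ[ℂ] V} (hA : LinearMap.adjoint A = A) : A.IsSymmetric :=
    (LinearMap.isSymmetric_iff_isSelfAdjoint A).2 (LinearMap.isSelfAdjoint_iff'.2 hA)
  have hP : P.IsSymmetricProjection := ⟨hPproj, isSymmetric hPsa⟩
  have hM : M.IsSymmetricProjection := ⟨hMproj, isSymmetric hMsa⟩
  have hinv (U : Submodule ℂ V) :
      (∀ T ∈ ({P, M, K} : Set (Module.End ℂ V)), U ∈ T.invtSubmodule) ↔
        U ∈ Module.End.invtSubmodule P ∧ U ∈ Module.End.invtSubmodule M ∧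
          U ∈ Module.End.invtSubmodule K := by
    simp
  obtain ⟨k, H, horth, hsup, hH⟩ := exists_orthogonal_decomposition (𝒯 := {P, M, K})
    (by simp [hP.isSymmetric, hM.isSymmetric, isSymmetric hKsa]) (IsJordanBlock P M)
    (fun U hU hU0 => by
      obtain ⟨hUP, hUM, hUK⟩ := (hinv U).1 hU
      obtain ⟨W, hWU, hW0, hWK, hWJ⟩ :=
        exists_isJordanBlock_le_of_commute hP hM hKP hKM hUP hUM hUK hU0
      exact ⟨W, hWU, hW0, (hinv W).2 ⟨hWJ.2.1, hWJ.2.2.1, hWK⟩, hWJ⟩)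
  refine ⟨k, H, fun α β hαβ => isOrtho_iff_inner_eq.1 (horth hαβ), hsup, fun α => (hH α).2.1,
    fun α ψ hψ => ?_, fun α => (hH α).2.2.2.2⟩
  obtain ⟨hHP, hHM, hHK⟩ := (hinv (H α)).1 (hH α).1
  exact ⟨hHP hψ, hHM hψ, hHK hψ⟩

/-- **Jordan's lemma for three projections.** Let `V` be a finite-dimensional complex
inner product space and `P, M, K` orthogonal projections with `[K, P] = [K, M] = 0`.
Then `V` decomposes as an internal direct sum of pairwise orthogonal subspaces `H α`
of dimension at most `2`, each invariant under `P`, `M` and `K`, and on every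
two-dimensional block there is an orthonormal basis `(e, f)` and an angle `θ` in which
`P` is `diag(1,0)` and `M` is `[[cos²θ, cosθ·sinθ], [cosθ·sinθ, sin²θ]]`. -/
theorem jordan_lemma_projections {V : Type} [NormedAddCommGroup V]
    [InnerProductSpace ℂ V] [FiniteDimensional ℂ V]
    (P M K : V →ₗ[ℂ] V)
    (hPsa : LinearMap.adjoint P = P) (hPproj : P ∘ₗ P = P)
    (hMsa : LinearMap.adjoint M = M) (hMproj : M ∘ₗ M = M)
    (hKsa : LinearMap.adjoint K = K) (hKproj : K ∘ₗ K = K)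
    (hKP : K ∘ₗ P = P ∘ₗ K) (hKM : K ∘ₗ M = M ∘ₗ K) :
    ∃ (k : ℕ) (H : Fin k → Submodule ℂ V),
      (∀ α β, α ≠ β → ∀ x ∈ H α, ∀ y ∈ H β, (inner ℂ x y : ℂ) = 0) ∧
      (⨆ α, H α) = ⊤ ∧
      (∀ α, Module.finrank ℂ (H α) ≤ 2) ∧
      (∀ α, ∀ ψ ∈ H α, P ψ ∈ H α ∧ M ψ ∈ H α ∧ K ψ ∈ H α) ∧
      (∀ α, Module.finrank ℂ (H α) = 2 →
        ∃ (e f : V) (θ : ℝ),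
          e ∈ H α ∧ f ∈ H α ∧ ‖e‖ = 1 ∧ ‖f‖ = 1 ∧ (inner ℂ e f : ℂ) = 0 ∧
          P e = e ∧ P f = 0 ∧
          M e = ((Real.cos θ : ℂ) ^ 2) • e + ((Real.cos θ : ℂ) * (Real.sin θ : ℂ)) • f ∧
          M f = ((Real.cos θ : ℂ) * (Real.sin θ : ℂ)) • e + ((Real.sin θ : ℂ) ^ 2) • f) :=
  jordan_lemma_projections_general P M K hPsa hPproj hMsa hMproj hKsa hKP hKM
end

section
/- Let ρ ∈ M_d(ℂ) be positive semidefinite with Tr(ρ) = 1, let M ∈ M_d(ℂ) be a Hermitian projection, and set ω = Tr(Mρ). If ω > 0 and ρ' = MρM / ω, then the trace norm satisfies ‖ρ' − ρ‖₁ ≤ 2√(1 − ω). -/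
open Matrix
open scoped ComplexOrder

/-- The trace norm `‖A‖₁ = Tr √(AᴴA)` of a complex matrix. -/
noncomputable def traceNorm {d : ℕ} (A : Matrix (Fin d) (Fin d) ℂ) : ℝ :=
  ((Matrix.posSemidef_conjTranspose_mul_self A).1.eigenvectorUnitary.1 *
    diagonal (((↑) : ℝ → ℂ) ∘ (√·) ∘ (Matrix.posSemidef_conjTranspose_mul_self A).1.eigenvalues) *
    (star (Matrix.posSemidef_conjTranspose_mul_self A).1.eigenvectorUnitary :
      Matrix (Fin d) (Fin d) ℂ)).trace.re

/-!
Write `ρ = BBᴴ` with `B = √ρ` and `ρ' = CCᴴ` with `C = MB/√ω`, so that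
`Tr BBᴴ = Tr CCᴴ = 1` and `Tr CBᴴ = √ω`. With `X = C - B` and `Y = (C + B)/2` we get
`CCᴴ - BBᴴ = XYᴴ + YXᴴ`. Evaluating this Hermitian matrix on its orthonormal eigenvectors `vᵢ`
gives `|λᵢ| ≤ 2‖Xᴴvᵢ‖‖Yᴴvᵢ‖`, and Cauchy–Schwarz over `i` bounds the trace norm by
`2‖X‖₂‖Y‖₂ = 2√((2 - 2√ω)(2 + 2√ω)/4) = 2√(1 - ω)`.
-/

open scoped MatrixOrder

namespace Matrix

variable {n 𝕜 : Type*} [Fintype n] [RCLike 𝕜]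

lemma norm_star_dotProduct_le (a b : n → 𝕜) :
    ‖star a ⬝ᵥ b‖ ≤ √(RCLike.re (star a ⬝ᵥ a)) * √(RCLike.re (star b ⬝ᵥ b)) := by
  have h := norm_inner_le_norm (𝕜 := 𝕜) (WithLp.toLp 2 a) (WithLp.toLp 2 b)
  rwa [norm_eq_sqrt_re_inner (𝕜 := 𝕜) (WithLp.toLp 2 a),
    norm_eq_sqrt_re_inner (𝕜 := 𝕜) (WithLp.toLp 2 b),
    EuclideanSpace.inner_toLp_toLp, EuclideanSpace.inner_toLp_toLp,
    EuclideanSpace.inner_toLp_toLp,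
    dotProduct_comm b, dotProduct_comm a, dotProduct_comm b] at h

lemma star_dotProduct_mul_conjTranspose_mulVec (Z W : Matrix n n 𝕜) (v : n → 𝕜) :
    star v ⬝ᵥ ((Z * Wᴴ) *ᵥ v) = star (Zᴴ *ᵥ v) ⬝ᵥ (Wᴴ *ᵥ v) := by
  rw [← mulVec_mulVec, dotProduct_mulVec, star_mulVec, conjTranspose_conjTranspose]

lemma abs_re_star_dotProduct_mul_conjTranspose_add_le (X Y : Matrix n n 𝕜) (v : n → 𝕜) :
    |RCLike.re (star v ⬝ᵥ ((X * Yᴴ + Y * Xᴴ) *ᵥ v))| ≤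
      2 * (√(RCLike.re (star v ⬝ᵥ ((X * Xᴴ) *ᵥ v))) *
        √(RCLike.re (star v ⬝ᵥ ((Y * Yᴴ) *ᵥ v)))) := by
  simp only [add_mulVec, dotProduct_add, star_dotProduct_mul_conjTranspose_mulVec]
  rw [star_dotProduct (Yᴴ *ᵥ v), map_add, RCLike.star_def, RCLike.conj_re, ← two_mul,
    abs_mul, abs_two]
  gcongr
  exact (RCLike.abs_re_le_norm _).trans (norm_star_dotProduct_le _ _)

variable [DecidableEq n]

lemma trace_eq_sum_star_dotProduct_mulVec (P : Matrix n n 𝕜)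
    (b : OrthonormalBasis n 𝕜 (EuclideanSpace 𝕜 n)) :
    P.trace = ∑ i, star ⇑(b i) ⬝ᵥ (P *ᵥ ⇑(b i)) := by
  rw [← trace_toLin_eq P (PiLp.basisFun 2 𝕜 n), ← toLpLin_eq_toLin,
    LinearMap.trace_eq_sum_inner _ b]
  simp [EuclideanSpace.inner_eq_star_dotProduct, dotProduct_comm]

lemma trace_conjStarAlgAut (U : unitary (Matrix n n 𝕜)) (A : Matrix n n 𝕜) :
    (Unitary.conjStarAlgAut 𝕜 _ U A).trace = A.trace := by
  rw [Unitary.conjStarAlgAut_apply, trace_mul_cycle, Unitary.coe_star_mul_self, one_mul]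

lemma IsHermitian.trace_cfc {A : Matrix n n 𝕜} (hA : A.IsHermitian) (f : ℝ → ℝ) :
    (cfc f A).trace = ∑ i, (f (hA.eigenvalues i) : 𝕜) := by
  rw [hA.cfc_eq, IsHermitian.cfc, trace_conjStarAlgAut, trace_diagonal]
  rfl

end Matrix

lemma traceNorm_eq_re_trace_abs {d : ℕ} (A : Matrix (Fin d) (Fin d) ℂ) :
    traceNorm A = (CFC.abs A).trace.re := by
  have hA := posSemidef_conjTranspose_mul_self A
  rw [traceNorm, CFC.abs, star_eq_conjTranspose A, CFC.sqrt_eq_real_sqrt _ hA.nonneg, cfcₙ_eq_cfc,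
    hA.1.cfc_eq, IsHermitian.cfc, Unitary.conjStarAlgAut_apply]
  rfl

lemma Matrix.IsHermitian.traceNorm_eq_sum_abs_eigenvalues {d : ℕ}
    {H : Matrix (Fin d) (Fin d) ℂ} (hH : H.IsHermitian) :
    traceNorm H = ∑ i, |hH.eigenvalues i| := by
  rw [traceNorm_eq_re_trace_abs, CFC.abs_eq_cfcₙ_norm H hH.isSelfAdjoint, cfcₙ_eq_cfc,
    hH.trace_cfc, Complex.re_sum]
  simp

lemma traceNorm_mul_conjTranspose_add_le {d : ℕ} (X Y : Matrix (Fin d) (Fin d) ℂ) :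
    traceNorm (X * Yᴴ + Y * Xᴴ) ≤ 2 * (√(X * Xᴴ).trace.re * √(Y * Yᴴ).trace.re) := by
  have hH : (X * Yᴴ + Y * Xᴴ).IsHermitian := by
    rw [IsHermitian, conjTranspose_add, conjTranspose_mul, conjTranspose_mul,
      conjTranspose_conjTranspose, conjTranspose_conjTranspose, add_comm]
  set v := hH.eigenvectorBasis
  let q (Z : Matrix (Fin d) (Fin d) ℂ) (i : Fin d) : ℝ :=
    (star ⇑(v i) ⬝ᵥ ((Z * Zᴴ) *ᵥ ⇑(v i))).re
  have hq_nonneg (Z i) : 0 ≤ q Z i := (posSemidef_self_mul_conjTranspose Z).re_dotProduct_nonneg _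
  have hq_sum (Z) : ∑ i, q Z i = (Z * Zᴴ).trace.re := by
    rw [trace_eq_sum_star_dotProduct_mulVec _ v, Complex.re_sum]
  rw [hH.traceNorm_eq_sum_abs_eigenvalues, ← hq_sum X, ← hq_sum Y]
  calc ∑ i, |hH.eigenvalues i| ≤ ∑ i, 2 * (√(q X i) * √(q Y i)) := by
        gcongr with i
        rw [hH.eigenvalues_eq]
        exact abs_re_star_dotProduct_mul_conjTranspose_add_le X Y _
    _ ≤ 2 * (√(∑ i, q X i) * √(∑ i, q Y i)) := by
        rw [← Finset.mul_sum]
        gcongr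
        exact Real.sum_sqrt_mul_sqrt_le _ (hq_nonneg X) (hq_nonneg Y)

lemma traceNorm_mul_conjTranspose_sub_le {d : ℕ} (B C : Matrix (Fin d) (Fin d) ℂ)
    (hB : (B * Bᴴ).trace = 1) (hC : (C * Cᴴ).trace = 1) :
    traceNorm (C * Cᴴ - B * Bᴴ) ≤ 2 * √(1 - (C * Bᴴ).trace.re ^ 2) := by
  set X := C - B
  set Y := (2⁻¹ : ℝ) • (C + B)
  have hdiff : C * Cᴴ - B * Bᴴ = X * Yᴴ + Y * Xᴴ := by
    simp only [X, Y, conjTranspose_smul, conjTranspose_add, conjTranspose_sub, star_trivial,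
      mul_smul_comm, smul_mul_assoc, ← smul_add]
    rw [eq_inv_smul_iff₀ two_ne_zero, two_smul]
    noncomm_ring
  have hBC : (B * Cᴴ).trace = star (C * Bᴴ).trace := by
    rw [← trace_conjTranspose, conjTranspose_mul, conjTranspose_conjTranspose]
  set r := (C * Bᴴ).trace.re
  have hX : (X * Xᴴ).trace.re = 2 - 2 * r := by
    simp only [X, conjTranspose_sub, sub_mul, mul_sub, trace_sub, hB, hC, hBC, Complex.sub_re,
      Complex.one_re, Complex.star_def, Complex.conj_re]
    ring
  have hY : (Y * Yᴴ).trace.re = (2 + 2 * r) / 4 := by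
    simp only [Y, conjTranspose_smul, conjTranspose_add, star_trivial, smul_mul_smul_comm, add_mul,
      mul_add, trace_smul, trace_add, hB, hC, hBC, Complex.real_smul, Complex.re_ofReal_mul,
      Complex.add_re, Complex.one_re, Complex.star_def, Complex.conj_re]
    ring
  have hX_nonneg : 0 ≤ 2 - 2 * r := by
    have := (posSemidef_self_mul_conjTranspose X).trace_nonneg
    exact hX ▸ (Complex.nonneg_iff.mp this).1
  calc traceNorm (C * Cᴴ - B * Bᴴ) = traceNorm (X * Yᴴ + Y * Xᴴ) := by rw [hdiff]
    _ ≤ 2 * (√(2 - 2 * r) * √((2 + 2 * r) / 4)) :=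
        hX ▸ hY ▸ traceNorm_mul_conjTranspose_add_le X Y
    _ = 2 * √(1 - r ^ 2) := by
        rw [← Real.sqrt_mul hX_nonneg]
        ring_nf

/-- **Gentle measurement lemma.** If `ρ` is a density matrix, `M` a Hermitian
projection, `ω = Tr(Mρ) > 0` and `ρ' = MρM/ω`, then `‖ρ' − ρ‖₁ ≤ 2√(1 − ω)`. -/
theorem gentle_measurement {d : ℕ} (ρ M : Matrix (Fin d) (Fin d) ℂ)
    (hρ : ρ.PosSemidef) (hρtr : ρ.trace = 1)
    (hMsa : M.IsHermitian) (hMproj : M * M = M)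
    (ω : ℝ) (hω : ω = ((M * ρ).trace).re) (hωpos : 0 < ω)
    (ρ' : Matrix (Fin d) (Fin d) ℂ) (hρ' : ρ' = ((ω : ℂ))⁻¹ • (M * ρ * M)) :
    traceNorm (ρ' - ρ) ≤ 2 * Real.sqrt (1 - ω) := by
  set B := CFC.sqrt ρ
  have hBB : B * B = ρ := CFC.sqrt_mul_sqrt_self ρ hρ.nonneg
  have hBH : Bᴴ = B := (CFC.sqrt_nonneg ρ).isSelfAdjoint
  have hMρ : (M * ρ).trace = ω := by
    have h : star (M * ρ).trace = (M * ρ).trace := by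
      rw [← trace_conjTranspose, conjTranspose_mul, hρ.1.eq, hMsa.eq, trace_mul_comm]
    rw [hω]
    exact (Complex.conj_eq_iff_re.mp h).symm
  have hω0 : (ω : ℂ) ≠ 0 := by exact_mod_cast hωpos.ne'
  have hsqrt : ((√ω : ℝ) : ℂ) * (√ω : ℝ) = ω := by
    rw [← Complex.ofReal_mul, Real.mul_self_sqrt hωpos.le]
  set C := ((√ω : ℝ) : ℂ)⁻¹ • (M * B)
  have hCC : C * Cᴴ = ρ' := by
    rw [hρ', conjTranspose_smul, conjTranspose_mul, hBH, hMsa.eq, smul_mul_smul_comm, ← hsqrt,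
      mul_inv, star_inv₀, Complex.star_def, Complex.conj_ofReal, ← hBB]
    noncomm_ring
  have hCB : (C * Bᴴ).trace = √ω := by
    rw [hBH, smul_mul_assoc, trace_smul, mul_assoc, hBB, hMρ, smul_eq_mul, ← hsqrt,
      inv_mul_cancel_left₀]
    exact_mod_cast (Real.sqrt_pos.mpr hωpos).ne'
  have hρ'tr : (C * Cᴴ).trace = 1 := by
    rw [hCC, hρ', trace_smul, trace_mul_cycle, hMproj, hMρ, smul_eq_mul, inv_mul_cancel₀ hω0]
  have h := traceNorm_mul_conjTranspose_sub_le B C (by rw [hBH, hBB, hρtr]) hρ'tr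
  rwa [hCB, hCC, hBH, hBB, Complex.ofReal_re, Real.sq_sqrt hωpos.le] at h
end

section
/- Let φ ∈ M_d(ℂ) be positive semidefinite with Tr(φ) = 1, and let P, Q ∈ M_d(ℂ) be Hermitian projections with Tr(Pφ) > 0. Define ψ = PφP / Tr(Pφ). Then |Tr(Qψ) − Tr(Qφ)| ≤ 2√(1 − Tr(Pφ)). -/
/-!
Equip matrices with the semi-inner product `⟪x, y⟫ = Tr(y φ xᴴ)` (the GNS construction for `φ`).
Then `1` is a unit vector, left multiplications by `P` and `Q` are orthogonal projections, and
`Tr(Qφ) = ‖Q 1‖²`, `Tr(Pφ) = ‖P 1‖²`, `Tr(Q PφP) = ‖Q P 1‖²`: the claim becomes a statement about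
a unit vector `v` and its projection `a = P v`. Since `‖v - a‖ = √(1 - ‖a‖²)` and `Q` is a contraction,
`‖Q v‖² - ‖Q a‖² ≤ 2 √(1 - ‖a‖²)`, and `‖Q a‖² ≤ ‖Q a‖² / ‖a‖²`. This bounds the difference from one
side; replacing `Q` by `1 - Q` flips its sign, by Pythagoras for `Q`.
-/

open Matrix
open scoped ComplexOrder

namespace LinearMap.IsSymmetricProjection

variable {𝕜 E : Type*} [RCLike 𝕜] [SeminormedAddCommGroup E] [InnerProductSpace 𝕜 E]
  {T P Q : E →ₗ[𝕜] E}

theorem one_sub (hT : T.IsSymmetricProjection) : (1 - T).IsSymmetricProjection where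
  isIdempotentElem := hT.isIdempotentElem.one_sub
  isSymmetric := LinearMap.IsSymmetric.sub (fun _ _ => rfl) hT.isSymmetric

theorem norm_sq_add_norm_sub_sq (hT : T.IsSymmetricProjection) (x : E) :
    ‖T x‖ ^ 2 + ‖x - T x‖ ^ 2 = ‖x‖ ^ 2 := by
  have horth : inner 𝕜 (T x) (x - T x) = 0 := by
    rw [inner_sub_right, hT.isSymmetric x x, hT.isSymmetric x (T x), ← Module.End.mul_apply,
      hT.isIdempotentElem.eq, sub_self]
  have := norm_add_sq_eq_norm_sq_add_norm_sq_of_inner_eq_zero _ _ horth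
  rw [add_sub_cancel] at this
  simpa only [sq] using this.symm

theorem norm_apply_le (hT : T.IsSymmetricProjection) (x : E) : ‖T x‖ ≤ ‖x‖ :=
  (pow_le_pow_iff_left₀ (norm_nonneg _) (norm_nonneg _) two_ne_zero).mp
    (by nlinarith [hT.norm_sq_add_norm_sub_sq x, sq_nonneg ‖x - T x‖])

theorem norm_sq_sub_norm_sq_proj_div_le (hP : P.IsSymmetricProjection)
    (hQ : Q.IsSymmetricProjection) {v : E} (hv : ‖v‖ = 1) (hPv : 0 < ‖P v‖) :
    ‖Q v‖ ^ 2 - ‖Q (P v)‖ ^ 2 / ‖P v‖ ^ 2 ≤ 2 * √(1 - ‖P v‖ ^ 2) := by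
  have hdist : ‖v - P v‖ = √(1 - ‖P v‖ ^ 2) := by
    have hPyth : ‖P v‖ ^ 2 + ‖v - P v‖ ^ 2 = 1 := by simpa [hv] using hP.norm_sq_add_norm_sub_sq v
    rw [← hPyth, add_sub_cancel_left, Real.sqrt_sq (norm_nonneg _)]
  have hPv1 : ‖P v‖ ≤ 1 := hv ▸ hP.norm_apply_le v
  have hQv : ‖Q v‖ ≤ 1 := hv ▸ hQ.norm_apply_le v
  have hQPv : ‖Q (P v)‖ ≤ 1 := (hQ.norm_apply_le _).trans hPv1
  have hQdist : ‖Q v‖ - ‖Q (P v)‖ ≤ ‖v - P v‖ := by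
    calc ‖Q v‖ - ‖Q (P v)‖ ≤ ‖Q v - Q (P v)‖ := norm_sub_norm_le _ _
      _ = ‖Q (v - P v)‖ := by rw [map_sub]
      _ ≤ ‖v - P v‖ := hQ.norm_apply_le _
  have hrenorm : ‖Q (P v)‖ ^ 2 ≤ ‖Q (P v)‖ ^ 2 / ‖P v‖ ^ 2 :=
    le_div_self (sq_nonneg _) (by positivity) (pow_le_one₀ (norm_nonneg _) hPv1)
  rw [← hdist]
  nlinarith [norm_nonneg (Q v), norm_nonneg (Q (P v)), norm_nonneg (v - P v)]

theorem abs_norm_sq_proj_div_sub_norm_sq_le (hP : P.IsSymmetricProjection)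
    (hQ : Q.IsSymmetricProjection) {v : E} (hv : ‖v‖ = 1) (hPv : 0 < ‖P v‖) :
    |‖Q (P v)‖ ^ 2 / ‖P v‖ ^ 2 - ‖Q v‖ ^ 2| ≤ 2 * √(1 - ‖P v‖ ^ 2) := by
  have hcompl := hP.norm_sq_sub_norm_sq_proj_div_le hQ.one_sub hv hPv
  simp only [LinearMap.sub_apply, Module.End.one_apply] at hcompl
  have hPyth_v : ‖Q v‖ ^ 2 + ‖v - Q v‖ ^ 2 = 1 := by simpa [hv] using hQ.norm_sq_add_norm_sub_sq v
  have hPyth_Pv := hQ.norm_sq_add_norm_sub_sq (P v)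
  rw [show ‖P v - Q (P v)‖ ^ 2 = ‖P v‖ ^ 2 - ‖Q (P v)‖ ^ 2 by linarith, sub_div,
    div_self (by positivity)] at hcompl
  rw [abs_le]
  constructor
  · linarith [hP.norm_sq_sub_norm_sq_proj_div_le hQ hv hPv]
  · linarith

end LinearMap.IsSymmetricProjection

namespace Matrix

variable {𝕜 n : Type*} [RCLike 𝕜] [Fintype n] {ρ : Matrix n n 𝕜}

theorem PosSemidef.trace_mul_mul_conjTranspose_eq_norm_sq (hρ : ρ.PosSemidef) (x : Matrix n n 𝕜) :
    letI := ρ.toMatrixSeminormedAddCommGroup hρ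
    (x * ρ * xᴴ).trace = ((‖x‖ ^ 2 : ℝ) : 𝕜) := by
  let := ρ.toMatrixSeminormedAddCommGroup hρ
  let := ρ.toMatrixInnerProductSpace hρ
  exact_mod_cast inner_self_eq_norm_sq_to_K (𝕜 := 𝕜) x

theorem PosSemidef.isSymmetricProjection_mulLeft (hρ : ρ.PosSemidef) {P : Matrix n n 𝕜}
    (hP : P.IsHermitian) (hPP : IsIdempotentElem P) :
    letI := ρ.toMatrixSeminormedAddCommGroup hρ
    letI := ρ.toMatrixInnerProductSpace hρ
    (LinearMap.mulLeft 𝕜 P).IsSymmetricProjection := by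
  let := ρ.toMatrixSeminormedAddCommGroup hρ
  let := ρ.toMatrixInnerProductSpace hρ
  refine ⟨LinearMap.ext fun x => ?_, fun x y => ?_⟩
  · change P * (P * x) = P * x
    rw [← mul_assoc, hPP.eq]
  · change (y * ρ * (P * x)ᴴ).trace = (P * y * ρ * xᴴ).trace
    rw [conjTranspose_mul, hP.eq, ← mul_assoc, trace_mul_comm, ← mul_assoc, ← mul_assoc]

theorem IsHermitian.trace_mul_mul_conjTranspose_of_isIdempotentElem {P : Matrix n n 𝕜}
    (hP : P.IsHermitian) (hPP : IsIdempotentElem P) (X : Matrix n n 𝕜) :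
    (P * X * Pᴴ).trace = (P * X).trace := by
  rw [hP.eq, trace_mul_comm, ← mul_assoc, hPP.eq]

end Matrix

/-- If `φ` is a density matrix, `P, Q` Hermitian projections with `Tr(Pφ) > 0`, and
`ψ = PφP / Tr(Pφ)`, then `|Tr(Qψ) − Tr(Qφ)| ≤ 2√(1 − Tr(Pφ))`. -/
theorem trace_gentle_measurement {d : ℕ} (φ P Q : Matrix (Fin d) (Fin d) ℂ)
    (hφ : φ.PosSemidef) (hφtr : φ.trace = 1)
    (hPsa : P.IsHermitian) (hPproj : P * P = P)
    (hQsa : Q.IsHermitian) (hQproj : Q * Q = Q)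
    (ω : ℝ) (hω : ω = ((P * φ).trace).re) (hωpos : 0 < ω)
    (ψ : Matrix (Fin d) (Fin d) ℂ) (hψ : ψ = ((ω : ℂ))⁻¹ • (P * φ * P)) :
    ‖(Q * ψ).trace - (Q * φ).trace‖ ≤ 2 * Real.sqrt (1 - ω) := by
  let := φ.toMatrixSeminormedAddCommGroup hφ
  let := φ.toMatrixInnerProductSpace hφ
  have hnorm := hφ.trace_mul_mul_conjTranspose_eq_norm_sq
  have hone : ‖(1 : Matrix (Fin d) (Fin d) ℂ)‖ = 1 := by
    have h := hnorm 1
    rw [one_mul, conjTranspose_one, mul_one, hφtr] at h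
    refine (pow_eq_one_iff_of_nonneg (norm_nonneg _) two_ne_zero).mp (Complex.ofReal_injective ?_)
    exact h.symm.trans Complex.ofReal_one.symm
  have hPφ : (P * φ).trace = ((‖P‖ ^ 2 : ℝ) : ℂ) :=
    (hPsa.trace_mul_mul_conjTranspose_of_isIdempotentElem hPproj φ).symm.trans (hnorm P)
  have hQφ : (Q * φ).trace = ((‖Q‖ ^ 2 : ℝ) : ℂ) :=
    (hQsa.trace_mul_mul_conjTranspose_of_isIdempotentElem hQproj φ).symm.trans (hnorm Q)
  have hQPφP : (Q * (P * φ * P)).trace = ((‖Q * P‖ ^ 2 : ℝ) : ℂ) :=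
    calc (Q * (P * φ * P)).trace = (Q * (P * φ * P) * Qᴴ).trace :=
          (hQsa.trace_mul_mul_conjTranspose_of_isIdempotentElem hQproj _).symm
      _ = (Q * P * φ * (Q * P)ᴴ).trace := by
          rw [conjTranspose_mul, hPsa.eq]
          simp only [mul_assoc]
      _ = ((‖Q * P‖ ^ 2 : ℝ) : ℂ) := hnorm (Q * P)
  obtain rfl : ω = ‖P‖ ^ 2 := by rw [hω, hPφ, Complex.ofReal_re]
  have key := (hφ.isSymmetricProjection_mulLeft hPsa hPproj).abs_norm_sq_proj_div_sub_norm_sq_le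
    (hφ.isSymmetricProjection_mulLeft hQsa hQproj) hone
  simp only [LinearMap.mulLeft_apply, mul_one] at key
  rw [hψ, Matrix.mul_smul, trace_smul, hQPφP, hQφ, smul_eq_mul, ← Complex.ofReal_inv,
    ← Complex.ofReal_mul, ← Complex.ofReal_sub, Complex.norm_real, Real.norm_eq_abs, inv_mul_eq_div]
  exact key ((norm_nonneg _).lt_of_ne' (sq_pos_iff.mp hωpos))
end

section
/- Let Π, M ∈ M_d(ℂ) be Hermitian projections and let φ ∈ M_d(ℂ) be positive semidefinite with Tr(φ) = 1. Set ω = Tr(Mφ), μ = |1/2 − Tr(MΠφΠ) − Tr(M(I−Π)φ(I−Π))|, and assume ω > 0. Let φ' = MφM / ω. Then |1/2 − Tr(MΠφ'Π) − Tr(M(I−Π)φ'(I−Π))| ≤ μ + 4√(1 − ω). -/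
/-!
With `B = PMP + (1 - P)M(1 - P)` the quantity in question is `1/2 - Re Tr(Bρ)`, and `0 ≤ B ≤ 1`.
Let `‖X‖_φ² = Tr(XφXᴴ)` be the GNS seminorm of the state `φ` and `T = √B`. Then
`Tr(Bφ) = ‖T‖_φ²` and `Tr(BMφM) = ‖TM‖_φ²`; as `T` is a contraction, these differ by at most
`‖1 - M‖_φ (‖1‖_φ + ‖M‖_φ) ≤ 2√(1 - ω)`. Renormalizing `MφM` by `ω` moves `Tr(BMφM)` by at most
`1 - ω ≤ √(1 - ω)`.
-/

open Matrix
open scoped ComplexOrder MatrixOrder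

theorem IsStarProjection.pinching_mem_Icc {R : Type*} [Ring R] [PartialOrder R] [StarRing R]
    [StarOrderedRing R] {p m : R} (hp : IsStarProjection p) (hm : IsStarProjection m) :
    p * m * p + (1 - p) * m * (1 - p) ∈ Set.Icc 0 1 := by
  have hq := hp.one_sub
  constructor
  · exact add_nonneg (hp.isSelfAdjoint.conjugate_nonneg hm.nonneg)
      (hq.isSelfAdjoint.conjugate_nonneg hm.nonneg)
  · calc p * m * p + (1 - p) * m * (1 - p) ≤ p * 1 * p + (1 - p) * 1 * (1 - p) :=
          add_le_add (hp.isSelfAdjoint.conjugate_le_conjugate hm.le_one)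
            (hq.isSelfAdjoint.conjugate_le_conjugate hm.le_one)
      _ = 1 := by rw [mul_one, mul_one, hp.isIdempotentElem.eq, hq.isIdempotentElem.eq,
          add_sub_cancel]

namespace Matrix

variable {n 𝕜 : Type*} [Fintype n] [RCLike 𝕜]

theorem trace_mul_nonneg [DecidableEq n] {A B : Matrix n n 𝕜} (hA : 0 ≤ A) (hB : 0 ≤ B) :
    0 ≤ (A * B).trace := by
  obtain ⟨C, rfl⟩ := CStarAlgebra.nonneg_iff_eq_star_mul_self.mp hA
  rw [Matrix.mul_assoc, trace_mul_comm, Matrix.mul_assoc, star_eq_conjTranspose,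
    ← Matrix.mul_assoc]
  exact (nonneg_iff_posSemidef.mp hB).mul_mul_conjTranspose_same C |>.trace_nonneg

theorem trace_mul_le_trace_mul [DecidableEq n] {A B C : Matrix n n 𝕜} (hAB : A ≤ B)
    (hC : 0 ≤ C) : (A * C).trace ≤ (B * C).trace := by
  simpa [sub_mul, trace_sub] using trace_mul_nonneg (sub_nonneg.mpr hAB) hC

theorem re_trace_mul_mem_Icc [DecidableEq n] {B ρ : Matrix n n 𝕜} (hB₀ : 0 ≤ B) (hB₁ : B ≤ 1)
    (hρ : 0 ≤ ρ) : RCLike.re (B * ρ).trace ∈ Set.Icc 0 (RCLike.re ρ.trace) :=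
  ⟨by simpa using RCLike.re_le_re (trace_mul_nonneg hB₀ hρ),
    by simpa using RCLike.re_le_re (trace_mul_le_trace_mul hB₁ hρ)⟩

theorem trace_mul_mul_mul_add_trace_mul_mul_mul {R : Type*} [CommSemiring R]
    (A P Q ρ : Matrix n n R) :
    (A * P * ρ * P).trace + (A * Q * ρ * Q).trace = ((P * A * P + Q * A * Q) * ρ).trace := by
  simp only [add_mul, trace_add, trace_mul_cycle (A * _) ρ]
  simp only [Matrix.mul_assoc]

/-- `gnsNorm φ X ^ 2 = Tr (Xᴴ X φ)`; for `0 ≤ φ` this is the seminorm of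
`Matrix.toMatrixSeminormedAddCommGroup φ`. -/
noncomputable def gnsNorm (φ X : Matrix n n 𝕜) : ℝ := √(RCLike.re (X * φ * Xᴴ).trace)

theorem gnsNorm_nonneg (φ X : Matrix n n 𝕜) : 0 ≤ gnsNorm φ X := Real.sqrt_nonneg _

variable {φ : Matrix n n 𝕜}

theorem gnsNorm_sq (hφ : 0 ≤ φ) (X : Matrix n n 𝕜) :
    gnsNorm φ X ^ 2 = RCLike.re (X * φ * Xᴴ).trace :=
  Real.sq_sqrt (RCLike.nonneg_iff.mp
    ((nonneg_iff_posSemidef.mp hφ).mul_mul_conjTranspose_same X).trace_nonneg).1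

theorem abs_gnsNorm_sub_gnsNorm_le (hφ : 0 ≤ φ) (X Y : Matrix n n 𝕜) :
    |gnsNorm φ X - gnsNorm φ Y| ≤ gnsNorm φ (X - Y) :=
  letI := φ.toMatrixSeminormedAddCommGroup (nonneg_iff_posSemidef.mp hφ)
  abs_norm_sub_norm_le X Y

theorem gnsNorm_mul_sq (hφ : 0 ≤ φ) (T X : Matrix n n 𝕜) :
    gnsNorm φ (T * X) ^ 2 = RCLike.re (star T * T * (X * φ * Xᴴ)).trace := by
  rw [gnsNorm_sq hφ, conjTranspose_mul, star_eq_conjTranspose, Matrix.mul_assoc Tᴴ,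
    trace_mul_comm Tᴴ]
  simp only [Matrix.mul_assoc]

theorem gnsNorm_mul_le [DecidableEq n] (hφ : 0 ≤ φ) {T : Matrix n n 𝕜} (hT : star T * T ≤ 1)
    (X : Matrix n n 𝕜) : gnsNorm φ (T * X) ≤ gnsNorm φ X := by
  have hXφX : 0 ≤ X * φ * Xᴴ :=
    nonneg_iff_posSemidef.mpr ((nonneg_iff_posSemidef.mp hφ).mul_mul_conjTranspose_same X)
  refine le_of_sq_le_sq ?_ (gnsNorm_nonneg φ X)
  rw [gnsNorm_mul_sq hφ, gnsNorm_sq hφ]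
  simpa using RCLike.re_le_re (trace_mul_le_trace_mul hT hXφX)

theorem gnsNorm_of_isStarProjection {P : Matrix n n 𝕜} (hP : IsStarProjection P) :
    gnsNorm φ P = √(RCLike.re (P * φ).trace) := by
  rw [gnsNorm, ← star_eq_conjTranspose, hP.isSelfAdjoint.star_eq, trace_mul_cycle,
    hP.isIdempotentElem.eq]

theorem abs_re_trace_mul_sub_le [DecidableEq n] (hφ : 0 ≤ φ) {B : Matrix n n 𝕜} (hB₀ : 0 ≤ B)
    (hB₁ : B ≤ 1) (X Y : Matrix n n 𝕜) :
    |RCLike.re (B * (X * φ * Xᴴ)).trace - RCLike.re (B * (Y * φ * Yᴴ)).trace|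
      ≤ gnsNorm φ (X - Y) * (gnsNorm φ X + gnsNorm φ Y) := by
  obtain ⟨T, hTB⟩ : ∃ T : Matrix n n 𝕜, star T * T = B :=
    ⟨CFC.sqrt B, by rw [(CFC.sqrt_nonneg B).isSelfAdjoint.star_eq, CFC.sqrt_mul_sqrt_self B hB₀]⟩
  have hT : star T * T ≤ 1 := hTB ▸ hB₁
  have hdiff : |gnsNorm φ (T * X) - gnsNorm φ (T * Y)| ≤ gnsNorm φ (X - Y) :=
    calc _ ≤ gnsNorm φ (T * X - T * Y) := abs_gnsNorm_sub_gnsNorm_le hφ _ _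
      _ = gnsNorm φ (T * (X - Y)) := by rw [Matrix.mul_sub]
      _ ≤ gnsNorm φ (X - Y) := gnsNorm_mul_le hφ hT _
  have hsum_nonneg := add_nonneg (gnsNorm_nonneg φ (T * X)) (gnsNorm_nonneg φ (T * Y))
  rw [← hTB, ← gnsNorm_mul_sq hφ, ← gnsNorm_mul_sq hφ, sq_sub_sq, abs_mul, mul_comm,
    abs_of_nonneg hsum_nonneg]
  exact mul_le_mul hdiff (add_le_add (gnsNorm_mul_le hφ hT X) (gnsNorm_mul_le hφ hT Y))
    hsum_nonneg (gnsNorm_nonneg _ _)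

theorem abs_re_trace_mul_sub_le_two_mul_sqrt [DecidableEq n] (hφ : 0 ≤ φ) (hφtr : φ.trace = 1)
    {M B : Matrix n n 𝕜} (hM : IsStarProjection M) (hB₀ : 0 ≤ B) (hB₁ : B ≤ 1) :
    |RCLike.re (B * φ).trace - RCLike.re (B * (M * φ * M)).trace|
      ≤ √(1 - RCLike.re (M * φ).trace) * 2 := by
  have key := abs_re_trace_mul_sub_le hφ hB₀ hB₁ 1 M
  rw [gnsNorm_of_isStarProjection hM, gnsNorm_of_isStarProjection hM.one_sub,
    gnsNorm_of_isStarProjection (IsStarProjection.one _)] at key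
  have hMH : Mᴴ = M := hM.isSelfAdjoint
  simp only [conjTranspose_one, hMH, Matrix.mul_one, Matrix.one_mul, sub_mul 1 M φ, trace_sub,
    map_sub, hφtr, RCLike.one_re, Real.sqrt_one] at key
  refine key.trans (mul_le_mul_of_nonneg_left ?_ (Real.sqrt_nonneg _))
  have hMφ : RCLike.re (M * φ).trace ≤ 1 := by
    simpa [hφtr] using (re_trace_mul_mem_Icc hM.nonneg hM.le_one hφ).2
  linarith [Real.sqrt_le_one.mpr hMφ]

end Matrix

theorem abs_sub_div_le_three_mul_sqrt {ω T a : ℝ} (hω₀ : 0 < ω) (hω₁ : ω ≤ 1) (hT₀ : 0 ≤ T)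
    (hTω : T ≤ ω) (haT : |a - T| ≤ √(1 - ω) * 2) : |a - T / ω| ≤ 3 * √(1 - ω) := by
  have hrescale : |T / ω - T| ≤ 1 - ω := by
    rw [abs_of_nonneg (by rw [sub_nonneg]; exact le_div_self hT₀ hω₀ hω₁), div_sub' hω₀.ne',
      div_le_iff₀ hω₀]
    nlinarith
  have hsqrt : 1 - ω ≤ √(1 - ω) := Real.le_sqrt_self_iff.mpr (by linarith)
  calc |a - T / ω| ≤ |a - T| + |T / ω - T| := by
        rw [abs_sub_comm (T / ω)]; exact abs_sub_le a T (T / ω)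
    _ ≤ 3 * √(1 - ω) := by linarith

/-- Transfer of the near-indistinguishability quantity `μ` from the state `φ` to the
renormalized post-measurement state `φ' = MφM/ω`: with `ω = Tr(Mφ) > 0` and
`μ = |1/2 − Tr(MPφP) − Tr(M(I−P)φ(I−P))|`, one has
`|1/2 − Tr(MPφ'P) − Tr(M(I−P)φ'(I−P))| ≤ μ + 4√(1 − ω)`. -/
theorem mu_transfer {d : ℕ} (P M φ : Matrix (Fin d) (Fin d) ℂ)
    (hPsa : P.IsHermitian) (hPproj : P * P = P)
    (hMsa : M.IsHermitian) (hMproj : M * M = M)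
    (hφ : φ.PosSemidef) (hφtr : φ.trace = 1)
    (ω μ : ℝ) (hω : ω = ((M * φ).trace).re) (hωpos : 0 < ω)
    (hμ : μ = |1 / 2 - ((M * P * φ * P).trace).re
      - ((M * (1 - P) * φ * (1 - P)).trace).re|)
    (φ' : Matrix (Fin d) (Fin d) ℂ) (hφ' : φ' = ((ω : ℂ))⁻¹ • (M * φ * M)) :
    |1 / 2 - ((M * P * φ' * P).trace).re
      - ((M * (1 - P) * φ' * (1 - P)).trace).re| ≤ μ + 4 * Real.sqrt (1 - ω) := by
  have hP : IsStarProjection P := ⟨hPproj, hPsa⟩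
  have hM : IsStarProjection M := ⟨hMproj, hMsa⟩
  have hφ₀ : 0 ≤ φ := nonneg_iff_posSemidef.mpr hφ
  set B := P * M * P + (1 - P) * M * (1 - P)
  obtain ⟨hB₀, hB₁⟩ := hP.pinching_mem_Icc hM
  have hpinch ρ : (M * P * ρ * P).trace.re + (M * (1 - P) * ρ * (1 - P)).trace.re
      = (B * ρ).trace.re := by
    rw [← Complex.add_re, trace_mul_mul_mul_add_trace_mul_mul_mul]
  have hMφM : 0 ≤ M * φ * M := by
    simpa [hMsa.eq] using nonneg_iff_posSemidef.mpr (hφ.mul_mul_conjTranspose_same M)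
  set T := (B * (M * φ * M)).trace.re
  obtain ⟨hT₀, hTω⟩ : 0 ≤ T ∧ T ≤ ω := by
    simpa [hω, trace_mul_cycle M φ M, hMproj] using re_trace_mul_mem_Icc hB₀ hB₁ hMφM
  have hω₁ : ω ≤ 1 := by
    simpa [← hω, hφtr] using (re_trace_mul_mem_Icc hM.nonneg hM.le_one hφ₀).2
  have hφ'T : (B * φ').trace.re = T / ω := by
    rw [hφ', Matrix.mul_smul, trace_smul, smul_eq_mul, ← Complex.ofReal_inv,
      Complex.re_ofReal_mul, div_eq_inv_mul]
  have hclose : |(B * φ).trace.re - T| ≤ √(1 - ω) * 2 := by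
    simpa [hω] using abs_re_trace_mul_sub_le_two_mul_sqrt hφ₀ hφtr hM hB₀ hB₁
  rw [sub_sub, hpinch, hμ, sub_sub, hpinch, hφ'T]
  calc |1 / 2 - T / ω| ≤ |1 / 2 - (B * φ).trace.re| + |(B * φ).trace.re - T / ω| :=
        abs_sub_le _ _ _
    _ ≤ |1 / 2 - (B * φ).trace.re| + 4 * √(1 - ω) := by
        linarith [abs_sub_div_le_three_mul_sqrt hωpos hω₁ hT₀ hTω hclose, Real.sqrt_nonneg (1 - ω)]
end
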